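/- Data augmentation with a single-bag join key requires a steiner tree of exactly two bags: given a calibrated junction tree and a new relation T whose join attributes are all contained in some existing bag b, extending the tree with a new bag for T connected to b preserves the junction tree properties (vertex coverage, edge coverage, running intersection), and only the single message b → T needs to be computed to obtain the aggregation over the augmented full join at bag T; all previously materialized messages remain valid. -/

import Mathlib

open Finset

variable {Att : Type*} [Fintype Att] [DecidableEq Att]
variable {Val : Att → Type*} [∀ a, Fintype (Val a)] [∀ a, DecidableEq (Val a)]
variable {D : Type*} [CommSemiring D]

/-- `R` depends only on the attributes in schema `S`. -/
def DependsOnlyOn (R : (∀ a, Val a) → D) (S : Finset Att) : Prop :=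
  ∀ t₁ t₂ : ∀ a, Val a, (∀ a ∈ S, t₁ a = t₂ a) → R t₁ = R t₂

/-- Join of annotated relations: multiply the annotations. -/
def joinRel (R T : (∀ a, Val a) → D) : (∀ a, Val a) → D := fun t => R t * T t

/-- Marginalize out a single attribute `A`: sum over all values of `A`. -/
def marg (A : Att) (R : (∀ a, Val a) → D) : (∀ a, Val a) → D :=
  fun t => ∑ v : Val A, R (Function.update t A v)

/-- Marginalize out all attributes in `E`. -/
def margOver (E : Finset Att) (R : (∀ a, Val a) → D) : (∀ a, Val a) → D :=
  fun t => ∑ s : ∀ a, Val a, if ∀ a, a ∉ E → s a = t a then R s else 0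

variable {V : Type*} [Fintype V] [DecidableEq V]

/-- `w` lies in the subtree rooted at `u` away from `v`: there is a walk from
`w` to `u` that avoids `v`. -/
def InSubtree (G : SimpleGraph V) (u v w : V) : Prop :=
  ∃ p : G.Walk w u, v ∉ p.support

/-- The running intersection property: if an attribute belongs to two bags then
it belongs to every bag on the path between them. -/
def RunningIntersection (G : SimpleGraph V) (bag : V → Finset Att) : Prop :=
  ∀ (a : Att) (u v : V) (p : G.Walk u v), p.IsPath →
    a ∈ bag u → a ∈ bag v → ∀ w ∈ p.support, a ∈ bag w

/-- `M` is a message system for the junction tree `(G, bag)` with local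
relations `L`: the message `u → v` marginalizes, onto the attributes shared by
`u` and `v`, the join of `u`'s local relation with all incoming messages from
`u`'s neighbors other than `v`. -/
def MsgSystem (G : SimpleGraph V) [DecidableRel G.Adj] (bag : V → Finset Att)
    (L : V → (∀ a, Val a) → D) (M : V → V → (∀ a, Val a) → D) : Prop :=
  ∀ u v, G.Adj u v →
    M u v = margOver (bag u \ bag v)
      (fun t => L u t * ∏ w ∈ (G.neighborFinset u).erase v, M w u t)

/-- Absorption at a bag: join of its local relation with all incoming messages. -/
def absorb (G : SimpleGraph V) [DecidableRel G.Adj]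
    (L : V → (∀ a, Val a) → D) (M : V → V → (∀ a, Val a) → D) (v : V) :
    (∀ a, Val a) → D :=
  fun t => L v t * ∏ w ∈ G.neighborFinset v, M w v t

/-- The junction tree extended with a new bag (vertex `none`) for the
augmentation relation, connected to the existing bag `b`. -/
def augGraph (G : SimpleGraph V) (b : V) : SimpleGraph (Option V) :=
  SimpleGraph.fromRel (fun x y =>
    (∃ u w : V, x = some u ∧ y = some w ∧ G.Adj u w) ∨ (x = none ∧ y = some b))

set_option linter.unusedSectionVars false

section MargCalc

variable {Att : Type*} [Fintype Att] [DecidableEq Att]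
variable {Val : Att → Type*} [∀ a, Fintype (Val a)] [∀ a, DecidableEq (Val a)]
variable {D : Type*} [CommSemiring D]

lemma DependsOnlyOn.mono {R : (∀ a, Val a) → D} {S S' : Finset Att}
    (h : DependsOnlyOn R S) (hs : S ⊆ S') : DependsOnlyOn R S' :=
  fun t₁ t₂ ht => h t₁ t₂ fun a ha => ht a (hs ha)

lemma margOver_eq_sum_filter (E : Finset Att) (R : (∀ a, Val a) → D) (t : ∀ a, Val a) :
    margOver E R t = ∑ s ∈ Finset.univ.filter (fun s => ∀ a, a ∉ E → s a = t a), R s := by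
  rw [Finset.sum_filter]; rfl

lemma DependsOnlyOn.margOver {R : (∀ a, Val a) → D} {S : Finset Att}
    (h : DependsOnlyOn R S) (E : Finset Att) : DependsOnlyOn (margOver E R) S := by
  intro t₁ t₂ ht
  rw [margOver_eq_sum_filter, margOver_eq_sum_filter]
  apply Finset.sum_nbij' (fun s => fun a => if a ∈ E then s a else t₂ a)
    (fun s => fun a => if a ∈ E then s a else t₁ a)
  · intro s hs
    simp only [Finset.mem_filter, Finset.mem_univ, true_and] at *
    intro a ha; simp [ha]
  · intro s hs
    simp only [Finset.mem_filter, Finset.mem_univ, true_and] at *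
    intro a ha; simp [ha]
  · intro s hs
    simp only [Finset.mem_filter, Finset.mem_univ, true_and] at hs
    funext a; by_cases ha : a ∈ E <;> simp [ha, hs a]
  · intro s hs
    simp only [Finset.mem_filter, Finset.mem_univ, true_and] at hs
    funext a; by_cases ha : a ∈ E <;> simp [ha, hs a]
  · intro s hs
    simp only [Finset.mem_filter, Finset.mem_univ, true_and] at hs
    apply h
    intro a ha
    by_cases hae : a ∈ E
    · simp [hae]
    · simp [hae, hs a hae, ht a ha]

/-- Pull a factor that doesn't depend on the marginalized attributes out of a
marginalization. -/
lemma margOver_mul_left {Q R : (∀ a, Val a) → D} {S E : Finset Att}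
    (hQ : DependsOnlyOn Q S) (hdisj : Disjoint S E) :
    margOver E (fun t => Q t * R t) = fun t => Q t * margOver E R t := by
  funext t
  simp only [margOver, Finset.mul_sum]
  refine Finset.sum_congr rfl fun s _ => ?_
  by_cases hc : ∀ a, a ∉ E → s a = t a
  · rw [if_pos hc, if_pos hc]
    rw [hQ s t fun a ha => hc a (Finset.disjoint_left.mp hdisj ha)]
  · rw [if_neg hc, if_neg hc, mul_zero]

lemma margOver_mul_right {Q R : (∀ a, Val a) → D} {S E : Finset Att}
    (hQ : DependsOnlyOn Q S) (hdisj : Disjoint S E) :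
    margOver E (fun t => R t * Q t) = fun t => margOver E R t * Q t := by
  have h := margOver_mul_left hQ hdisj (R := R)
  funext t
  rw [show (fun t => R t * Q t) = (fun t => Q t * R t) from funext fun t => mul_comm _ _, h,
    mul_comm]

lemma margOver_margOver {E₁ E₂ : Finset Att} (hdisj : Disjoint E₁ E₂)
    (R : (∀ a, Val a) → D) :
    margOver E₁ (margOver E₂ R) = margOver (E₁ ∪ E₂) R := by
  funext t
  simp only [margOver]
  have key : ∀ x : ∀ a, Val a,
      (if ∀ a, a ∉ E₁ → x a = t a then (∑ r : ∀ a, Val a, if ∀ a, a ∉ E₂ → r a = x a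
          then R r else 0) else 0)
        = ∑ r : ∀ a, Val a, if (∀ a, a ∉ E₁ → x a = t a) ∧ (∀ a, a ∉ E₂ → r a = x a)
          then R r else 0 := by
    intro x
    split_ifs with h
    · exact Finset.sum_congr rfl fun r _ => (if_congr (and_iff_right h) rfl rfl).symm
    · exact (Finset.sum_eq_zero fun r _ => if_neg fun hc => h hc.1).symm
  rw [Finset.sum_congr rfl fun x _ => key x, Finset.sum_comm]
  refine Finset.sum_congr rfl fun r _ => ?_
  by_cases hQ : ∀ a, a ∉ E₁ ∪ E₂ → r a = t a
  · rw [if_pos hQ]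
    have hset : (Finset.univ.filter (fun x => (∀ a, a ∉ E₁ → x a = t a) ∧
        (∀ a, a ∉ E₂ → r a = x a))) = {fun a => if a ∈ E₂ then t a else r a} := by
      ext x
      simp only [Finset.mem_filter, Finset.mem_univ, true_and, Finset.mem_singleton]
      constructor
      · rintro ⟨h1, h2⟩
        funext a
        by_cases ha : a ∈ E₂
        · simp only [ha, if_true]
          exact h1 a (Finset.disjoint_right.mp hdisj ha)
        · simp only [ha, if_false]
          exact (h2 a ha).symm
      · rintro rfl
        refine ⟨fun a ha => ?_, fun a ha => by
          show r a = if a ∈ E₂ then t a else r a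
          rw [if_neg ha]⟩
        show (if a ∈ E₂ then t a else r a) = t a
        by_cases ha2 : a ∈ E₂
        · rw [if_pos ha2]
        · rw [if_neg ha2]
          exact hQ a (by simp [ha, ha2])
    rw [← Finset.sum_filter, hset, Finset.sum_singleton]
  · rw [if_neg hQ]
    apply Finset.sum_eq_zero
    intro x _
    rw [if_neg]
    rintro ⟨h1, h2⟩
    exact hQ fun a ha => by
      simp only [Finset.mem_union, not_or] at ha
      rw [h2 a ha.2, h1 a ha.1]

lemma DependsOnlyOn.mul {Q R : (∀ a, Val a) → D} {S S' : Finset Att}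
    (hQ : DependsOnlyOn Q S) (hR : DependsOnlyOn R S') :
    DependsOnlyOn (fun t => Q t * R t) (S ∪ S') := by
  intro t₁ t₂ ht
  simp only
  rw [hQ t₁ t₂ fun a ha => ht a (Finset.mem_union_left _ ha),
    hR t₁ t₂ fun a ha => ht a (Finset.mem_union_right _ ha)]

lemma DependsOnlyOn.prod {ι : Type*} (I : Finset ι) (R : ι → (∀ a, Val a) → D)
    (S : ι → Finset Att) (h : ∀ i ∈ I, DependsOnlyOn (R i) (S i)) :
    DependsOnlyOn (fun t => ∏ i ∈ I, R i t) (I.sup S) := by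
  intro t₁ t₂ ht
  simp only
  refine Finset.prod_congr rfl fun i hi => ?_
  exact h i hi t₁ t₂ fun a ha => ht a (Finset.mem_sup.mpr ⟨i, hi, ha⟩)

lemma margOver_empty (R : (∀ a, Val a) → D) : margOver (⊥ : Finset Att) R = R := by
  funext t
  rw [margOver, Finset.sum_eq_single t]
  · simp
  · intro s _ hs
    rw [if_neg]
    intro h
    exact hs (funext fun a => h a (by simp))
  · simp

/-- Merge a product of marginalizations over disjoint attribute sets into a
single marginalization of the product. -/
lemma prod_margOver {ι : Type*} [DecidableEq ι] (I : Finset ι)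
    (R : ι → (∀ a, Val a) → D) (S E : ι → Finset Att)
    (hdep : ∀ i ∈ I, DependsOnlyOn (R i) (S i))
    (hE : ∀ i ∈ I, E i ⊆ S i)
    (hcross : ∀ i ∈ I, ∀ j ∈ I, i ≠ j → Disjoint (E i) (S j)) :
    (fun t => ∏ i ∈ I, margOver (E i) (R i) t) =
      margOver (I.sup E) (fun t => ∏ i ∈ I, R i t) := by
  classical
  induction I using Finset.induction_on with
  | empty =>
    simp only [Finset.prod_empty, Finset.sup_empty, margOver_empty]
  | insert i I' hni ih =>
    have hrest : (fun t => ∏ j ∈ I', margOver (E j) (R j) t) =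
        margOver (I'.sup E) (fun t => ∏ j ∈ I', R j t) := by
      apply ih (fun j hj => hdep j (Finset.mem_insert_of_mem hj))
        (fun j hj => hE j (Finset.mem_insert_of_mem hj))
        (fun j hj k hk hjk => hcross j (Finset.mem_insert_of_mem hj) k
          (Finset.mem_insert_of_mem hk) hjk)
    have h1 : DependsOnlyOn (margOver (E i) (R i)) (S i) :=
      (hdep i (Finset.mem_insert_self i I')).margOver _
    have hQdep : DependsOnlyOn (fun s => ∏ j ∈ I', R j s) (I'.sup S) :=
      DependsOnlyOn.prod I' R S fun j hj => hdep j (Finset.mem_insert_of_mem hj)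
    have hd1 : Disjoint (I'.sup S) (E i) := by
      rw [Finset.disjoint_sup_left]
      intro j hj
      exact (hcross i (Finset.mem_insert_self i I') j (Finset.mem_insert_of_mem hj)
        (fun h => hni (h ▸ hj))).symm
    have hdisj : Disjoint (S i) (I'.sup E) := by
      rw [Finset.disjoint_sup_right]
      intro j hj
      exact (hcross j (Finset.mem_insert_of_mem hj) i (Finset.mem_insert_self i I')
        (fun h => hni (h ▸ hj))).symm
    have hd2 : Disjoint (I'.sup E) (E i) :=
      Finset.disjoint_of_subset_right (hE i (Finset.mem_insert_self i I')) hdisj.symm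
    funext t
    rw [Finset.prod_insert hni, Finset.sup_insert, congrFun hrest t]
    calc margOver (E i) (R i) t * margOver (I'.sup E) (fun s => ∏ j ∈ I', R j s) t
        = margOver (I'.sup E) (fun s => margOver (E i) (R i) s * ∏ j ∈ I', R j s) t := by
          rw [margOver_mul_left h1 hdisj]
      _ = margOver (I'.sup E) (margOver (E i) (fun s => R i s * ∏ j ∈ I', R j s)) t := by
          rw [margOver_mul_right hQdep hd1]
      _ = margOver (I'.sup E ∪ E i) (fun s => R i s * ∏ j ∈ I', R j s) t := by
          rw [margOver_margOver hd2.symm.symm _]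
      _ = margOver (E i ⊔ I'.sup E) (fun s => ∏ j ∈ insert i I', R j s) t := by
          rw [Finset.union_comm]
          congr 1
          funext s
          rw [Finset.prod_insert hni]

end MargCalc
section Trees

open SimpleGraph Walk

variable {V : Type*} [Fintype V] [DecidableEq V] {G : SimpleGraph V}

lemma InSubtree.ne_center {u v w : V} (h : InSubtree G u v w) : w ≠ v :=
  fun hw => h.choose_spec (hw ▸ h.choose.start_mem_support)

lemma InSubtree.root_ne_center {u v w : V} (h : InSubtree G u v w) : u ≠ v :=
  fun hu => h.choose_spec (hu ▸ h.choose.end_mem_support)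

lemma inSubtree_self {u v : V} (h : u ≠ v) : InSubtree G u v u :=
  ⟨Walk.nil, by simp [Ne.symm h]⟩

/-- Any walk between the two sides of a separator vertex `u` passes through `u`. -/
lemma cross_mem_support {c u x y : V} (hx : InSubtree G c u x)
    (hy : ¬ InSubtree G c u y) (p : G.Walk x y) : u ∈ p.support := by
  by_contra hu
  obtain ⟨q, hq⟩ := hx
  refine hy ⟨p.reverse.append q, ?_⟩
  rw [Walk.mem_support_append_iff, Walk.support_reverse]
  rintro (h | h)
  · exact hu (List.mem_reverse.mp h)
  · exact hq h

/-- A path can be extended by an edge whose head is not on the path. -/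
lemma isPath_concat {u v w : V} {p : G.Walk u v} (hp : p.IsPath) (h : G.Adj v w)
    (hw : w ∉ p.support) : (p.concat h).IsPath := by
  rw [← Walk.isPath_reverse_iff, Walk.reverse_concat, Walk.cons_isPath_iff,
    Walk.isPath_reverse_iff, Walk.support_reverse]
  exact ⟨hp, fun hc => hw (List.mem_reverse.mp hc)⟩

/-- The endpoint of a non-trivial walk occurs in the tail of its support. -/
lemma end_mem_tail_support {u v : V} (p : G.Walk u v) (h : u ≠ v) :
    v ∈ p.support.tail := by
  cases p with
  | nil => exact absurd rfl h
  | cons h' q => simp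

variable (hG : G.IsTree)
include hG

/-- Membership in a subtree in terms of the unique path. -/
lemma inSubtree_iff_path {u v w : V} {p : G.Walk w u} (hp : p.IsPath) :
    InSubtree G u v w ↔ v ∉ p.support := by
  constructor
  · rintro ⟨q, hq⟩
    have : q.bypass = p := (hG.existsUnique_path w u).unique q.bypass_isPath hp
    intro hv
    exact hq (q.support_bypass_subset (this ▸ hv))
  · intro hv
    exact ⟨p, hv⟩

/-- Opposite subtrees across an edge of a tree partition the vertices. -/
lemma inSubtree_compl {u v : V} (huv : G.Adj u v) (w : V) :
    InSubtree G u v w ↔ ¬ InSubtree G v u w := by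
  obtain ⟨p, hp, -⟩ := hG.existsUnique_path w u
  rw [inSubtree_iff_path hG hp]
  constructor
  · intro hv hc
    have hq : (p.concat huv).IsPath := isPath_concat hp huv hv
    rw [inSubtree_iff_path hG hq] at hc
    exact hc (by simp [Walk.support_concat])
  · intro hc hv
    obtain ⟨q, hqp, -⟩ := hG.existsUnique_path w v
    rw [inSubtree_iff_path hG hqp] at hc
    push_neg at hc
    -- `u ∈ q.support`; take the initial segment up to `u`
    have ht : (q.takeUntil u hc).IsPath := hqp.takeUntil hc
    have hvt : v ∉ (q.takeUntil u hc).support := by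
      have hspec := q.take_spec hc
      have hnd := hqp.support_nodup
      rw [← hspec, Walk.support_append, List.nodup_append] at hnd
      intro hmem
      exact hnd.2.2 _ hmem _ (end_mem_tail_support (q.dropUntil u hc) huv.ne) rfl
    have : q.takeUntil u hc = p := (hG.existsUnique_path w u).unique ht hp
    exact (this ▸ hvt) hv

/-- Two different subtrees hanging off the same vertex are disjoint. -/
lemma inSubtree_disjoint {u x x' w : V} (hx : G.Adj x u) (hx' : G.Adj x' u)
    (h : InSubtree G x u w) (h' : InSubtree G x' u w) : x = x' := by
  obtain ⟨p0, hp0⟩ := h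
  obtain ⟨p0', hp0'⟩ := h'
  set p := p0.bypass with hpdef
  set p' := p0'.bypass with hpdef'
  have hup : u ∉ p.support := fun hc => hp0 (p0.support_bypass_subset hc)
  have hup' : u ∉ p'.support := fun hc => hp0' (p0'.support_bypass_subset hc)
  have hq : (p.concat hx).IsPath := isPath_concat p0.bypass_isPath hx hup
  have hq' : (p'.concat hx').IsPath := isPath_concat p0'.bypass_isPath hx' hup'
  have heq : p.concat hx = p'.concat hx' := (hG.existsUnique_path w u).unique hq hq'
  have hsup : p.support ++ [u] = p'.support ++ [u] := by
    have := congrArg Walk.support heq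
    rwa [Walk.support_concat, Walk.support_concat] at this
  have hsup' : p.support = p'.support := by
    exact List.append_cancel_right hsup
  have h1 : p.support.getLast (by simp) = x := p.getLast_support
  have h2 : p'.support.getLast (by simp) = x' := p'.getLast_support
  rw [← h1, ← h2]
  congr 1

/-- Every vertex of a subtree other than its root lies in a subtree hanging
off a neighbor of the root. -/
lemma inSubtree_step {u v w : V} (hw : InSubtree G u v w) (hne : w ≠ u) :
    ∃ x, G.Adj x u ∧ x ≠ v ∧ InSubtree G x u w := by
  obtain ⟨p0, hp0⟩ := hw
  set p := p0.bypass with hpdef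
  have hp : p.IsPath := p0.bypass_isPath
  have hvp : v ∉ p.support := fun hc => hp0 (p0.support_bypass_subset hc)
  obtain ⟨x, h, q, hq⟩ := Walk.exists_eq_cons_of_ne (Ne.symm hne) p.reverse
  have hpe : p = q.reverse.concat h.symm := by
    rw [← Walk.reverse_reverse p, hq, Walk.reverse_cons]
    rfl
  have hu : u ∉ q.reverse.support := by
    have hnd := hp.support_nodup
    rw [hpe, Walk.support_concat, List.nodup_append] at hnd
    intro hc
    exact hnd.2.2 _ hc _ (by simp) rfl
  refine ⟨x, h.symm, ?_, q.reverse, hu⟩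
  intro hxv
  apply hvp
  rw [hpe, Walk.support_concat]
  exact List.mem_append_left _ (hxv ▸ q.reverse.end_mem_support)

/-- Stepping towards the root stays in the subtree. -/
lemma inSubtree_mono {u v x w : V} (huv : G.Adj u v) (hxu : G.Adj x u) (hxv : x ≠ v)
    (hw : InSubtree G x u w) : InSubtree G u v w := by
  rw [inSubtree_compl hG huv]
  intro hc
  exact hxv (inSubtree_disjoint hG hxu huv.symm hw hc)

end Trees
section Msg

open SimpleGraph Walk

variable {Att : Type*} [Fintype Att] [DecidableEq Att]
variable {Val : Att → Type*} [∀ a, Fintype (Val a)] [∀ a, DecidableEq (Val a)]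
variable {D : Type*} [CommSemiring D]
variable {V : Type*} [Fintype V] [DecidableEq V]

/-- The set of vertices in the subtree at `c` away from `u`. -/
noncomputable def subt (G : SimpleGraph V) (c u : V) : Finset V :=
  @Finset.filter _ (fun w => InSubtree G c u w) (Classical.decPred _) Finset.univ

lemma mem_subt {G : SimpleGraph V} {c u w : V} : w ∈ subt G c u ↔ InSubtree G c u w := by
  rw [subt]
  rw [@Finset.mem_filter V _ (Classical.decPred _) Finset.univ w]
  simp

variable {G : SimpleGraph V} [DecidableRel G.Adj]

lemma attr_mem_center (hG : G.IsTree) {bag : V → Finset Att}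
    (hRI : RunningIntersection G bag) {x c y y' : V} {a : Att}
    (hy : InSubtree G x c y) (hy' : ¬ InSubtree G x c y')
    (hay : a ∈ bag y) (hay' : a ∈ bag y') : a ∈ bag c := by
  obtain ⟨p, hp, -⟩ := hG.existsUnique_path y y'
  exact hRI a y y' p hp hay hay' c (cross_mem_support hy hy' p)

lemma global_step (hG : G.IsTree) {b w : V} (hne : w ≠ b) :
    ∃ x, G.Adj x b ∧ InSubtree G x b w := by
  obtain ⟨p, hp, -⟩ := hG.existsUnique_path w b
  obtain ⟨x, h, q, hq⟩ := Walk.exists_eq_cons_of_ne (Ne.symm hne) p.reverse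
  have hpe : p = q.reverse.concat h.symm := by
    rw [← Walk.reverse_reverse p, hq, Walk.reverse_cons]
    rfl
  have hu : b ∉ q.reverse.support := by
    have hnd := hp.support_nodup
    rw [hpe, Walk.support_concat, List.nodup_append] at hnd
    intro hc
    exact hnd.2.2 _ hc _ (by simp) rfl
  exact ⟨x, h.symm, q.reverse, hu⟩

/-- Decomposition of a subtree into its root and the subtrees at the root's
other neighbors. -/
lemma subt_decomp (hG : G.IsTree) {c u : V} (hcu : G.Adj c u) :
    subt G c u = insert c (((G.neighborFinset c).erase u).biUnion (fun x => subt G x c)) := by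
  ext w
  simp only [Finset.mem_insert, Finset.mem_biUnion, Finset.mem_erase, mem_subt,
    SimpleGraph.mem_neighborFinset]
  constructor
  · intro hw
    by_cases hwc : w = c
    · exact Or.inl hwc
    · obtain ⟨x, hx1, hx2, hx3⟩ := inSubtree_step hG hw hwc
      exact Or.inr ⟨x, ⟨hx2, hx1.symm⟩, hx3⟩
  · rintro (rfl | ⟨x, ⟨hx2, hx1⟩, hx3⟩)
    · exact inSubtree_self hcu.ne
    · exact inSubtree_mono hG hcu hx1.symm hx2 hx3

lemma subt_pairwiseDisjoint (hG : G.IsTree) {c : V} {N : Finset V}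
    (hN : N ⊆ G.neighborFinset c) :
    (N : Set V).PairwiseDisjoint (fun x => subt G x c) := by
  intro x hx x' hx' hne
  rw [Function.onFun, Finset.disjoint_left]
  intro w hw hw'
  exact hne (inSubtree_disjoint hG ((SimpleGraph.mem_neighborFinset _ _ _).mp (hN hx)).symm
    ((SimpleGraph.mem_neighborFinset _ _ _).mp (hN hx')).symm (mem_subt.mp hw) (mem_subt.mp hw'))

lemma univ_decomp (hG : G.IsTree) (b : V) :
    (Finset.univ : Finset V) = insert b ((G.neighborFinset b).biUnion (fun x => subt G x b)) := by
  ext w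
  simp only [Finset.mem_univ, true_iff, Finset.mem_insert, Finset.mem_biUnion, mem_subt,
    SimpleGraph.mem_neighborFinset]
  by_cases hwb : w = b
  · exact Or.inl hwb
  · obtain ⟨x, hx1, hx3⟩ := global_step hG hwb
    exact Or.inr ⟨x, hx1.symm, hx3⟩

lemma root_not_mem_biUnion {c : V} {N : Finset V} :
    c ∉ N.biUnion (fun x => subt G x c) := by
  simp only [Finset.mem_biUnion, mem_subt, not_exists, not_and]
  intro x _ hc
  exact hc.ne_center rfl

/-- Correctness of message passing: each message is the marginalization of the
join over its subtree, projected onto the receiving bag. -/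
lemma msg_correct (hG : G.IsTree) {bag : V → Finset Att}
    (hRI : RunningIntersection G bag) {L : V → (∀ a, Val a) → D}
    (hL : ∀ v, DependsOnlyOn (L v) (bag v))
    {M : V → V → (∀ a, Val a) → D} (hM : MsgSystem G bag L M) :
    ∀ (n : ℕ) (c u : V), G.Adj c u → (subt G c u).card ≤ n →
      M c u = margOver ((subt G c u).sup bag \ bag u)
        (fun t => ∏ w ∈ subt G c u, L w t) := by
  intro n
  induction n with
  | zero =>
    intro c u hcu hcard
    exfalso
    have : c ∈ subt G c u := mem_subt.mpr (inSubtree_self hcu.ne)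
    have := Finset.card_pos.mpr ⟨c, this⟩
    omega
  | succ n ih =>
    intro c u hcu hcard
    set N' := (G.neighborFinset c).erase u with hN'
    have hN'sub : N' ⊆ G.neighborFinset c := Finset.erase_subset _ _
    have hadj : ∀ x ∈ N', G.Adj x c ∧ x ≠ u := by
      intro x hx
      rw [hN', Finset.mem_erase, SimpleGraph.mem_neighborFinset] at hx
      exact ⟨hx.2.symm, hx.1⟩
    -- subtree sets of neighbors are strictly smaller
    have hsubset : ∀ x ∈ N', subt G x c ⊆ subt G c u := by
      intro x hx w hw
      exact mem_subt.mpr (inSubtree_mono hG hcu (hadj x hx).1 (hadj x hx).2 (mem_subt.mp hw))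
    have hlt : ∀ x ∈ N', (subt G x c).card ≤ n := by
      intro x hx
      have hc1 : c ∈ subt G c u := mem_subt.mpr (inSubtree_self hcu.ne)
      have hc2 : c ∉ subt G x c := fun hc => (mem_subt.mp hc).ne_center rfl
      have : (subt G x c).card < (subt G c u).card :=
        Finset.card_lt_card (Finset.ssubset_iff_of_subset (hsubset x hx) |>.mpr
          ⟨c, hc1, hc2⟩)
      omega
    -- not-in-other-subtree facts
    have hnotin : ∀ x ∈ N', ∀ x' ∈ N', x ≠ x' → ∀ w ∈ subt G x' c, ¬ InSubtree G x c w := by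
      intro x hx x' hx' hne w hw hc
      exact hne (inSubtree_disjoint hG (hadj x hx).1 (hadj x' hx').1 hc (mem_subt.mp hw))
    have hu_not : ∀ x ∈ N', ¬ InSubtree G x c u := by
      intro x hx hc
      exact (hadj x hx).2 (inSubtree_disjoint hG (hadj x hx).1 hcu.symm hc
        (inSubtree_self hcu.symm.ne))
    -- cross-attribute disjointness
    have hcross : ∀ x ∈ N', ∀ x' ∈ N', x ≠ x' →
        Disjoint ((subt G x c).sup bag \ bag c) ((subt G x' c).sup bag) := by
      intro x hx x' hx' hne
      rw [Finset.disjoint_left]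
      intro a ha ha'
      rw [Finset.mem_sdiff] at ha
      obtain ⟨y, hy, hay⟩ := Finset.mem_sup.mp ha.1
      obtain ⟨y', hy', hay'⟩ := Finset.mem_sup.mp ha'
      exact ha.2 (attr_mem_center hG hRI (mem_subt.mp hy)
        (hnotin x hx x' hx' hne y' hy' ) hay hay')
    -- apply induction hypothesis to all incoming messages
    rw [hM c u hcu]
    have hmsg : ∀ x ∈ N', M x c = margOver ((subt G x c).sup bag \ bag c)
        (fun t => ∏ w ∈ subt G x c, L w t) := by
      intro x hx
      exact ih x c (hadj x hx).1 (hlt x hx)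
    have hprod : (fun t => ∏ x ∈ N', M x c t) =
        margOver (N'.sup (fun x => (subt G x c).sup bag \ bag c))
          (fun t => ∏ x ∈ N', (∏ w ∈ subt G x c, L w t)) := by
      have := prod_margOver (D := D) N'
        (fun x => fun t => ∏ w ∈ subt G x c, L w t)
        (fun x => (subt G x c).sup bag)
        (fun x => (subt G x c).sup bag \ bag c)
        (fun x _ => DependsOnlyOn.prod _ _ _ (fun w _ => hL w))
        (fun x _ => Finset.sdiff_subset)
        (fun x hx x' hx' hne => hcross x hx x' hx' hne)
      rw [← this]
      funext t
      exact Finset.prod_congr rfl fun x hx => by rw [hmsg x hx]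
    -- the big attribute set
    set B := N'.sup (fun x => (subt G x c).sup bag \ bag c) with hB
    have hBc : Disjoint (bag c) B := by
      rw [hB, Finset.disjoint_sup_right]
      intro x hx
      rw [Finset.disjoint_right]
      intro a ha
      exact (Finset.mem_sdiff.mp ha).2
    have hinner : (fun t => L c t * ∏ x ∈ N', M x c t) =
        margOver B (fun t => L c t * ∏ x ∈ N', (∏ w ∈ subt G x c, L w t)) := by
      rw [margOver_mul_left (hL c) hBc]
      funext t
      rw [congrFun hprod t]
    rw [hinner, margOver_margOver]
    · -- rewrite the attribute set and the product
      have hset : bag c \ bag u ∪ B = (subt G c u).sup bag \ bag u := by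
        ext a
        simp only [Finset.mem_union, Finset.mem_sdiff, hB, Finset.mem_sup]
        constructor
        · rintro (⟨hac, hau⟩ | ⟨x, hx, ha⟩)
          · exact ⟨⟨c, mem_subt.mpr (inSubtree_self hcu.ne), hac⟩, hau⟩
          · obtain ⟨⟨y, hy, hay⟩, hac⟩ := ha
            refine ⟨⟨y, hsubset x hx hy, hay⟩, fun hau => hac ?_⟩
            exact attr_mem_center hG hRI (mem_subt.mp hy) (hu_not x hx) hay hau
        · rintro ⟨⟨y, hy, hay⟩, hau⟩
          by_cases hac : a ∈ bag c
          · exact Or.inl ⟨hac, hau⟩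
          · have hyc : y ≠ c := fun h => hac (h ▸ hay)
            obtain ⟨x, hx1, hx2, hx3⟩ := inSubtree_step hG (mem_subt.mp hy) hyc
            refine Or.inr ⟨x, ?_, ?_⟩
            · rw [hN', Finset.mem_erase, SimpleGraph.mem_neighborFinset]
              exact ⟨hx2, hx1.symm⟩
            · exact ⟨⟨y, mem_subt.mpr hx3, hay⟩, hac⟩
      have hfun : (fun t => L c t * ∏ x ∈ N', (∏ w ∈ subt G x c, L w t)) =
          (fun t => ∏ w ∈ subt G c u, L w t) := by
        funext t
        rw [subt_decomp hG hcu, Finset.prod_insert root_not_mem_biUnion,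
          Finset.prod_biUnion (subt_pairwiseDisjoint hG hN'sub)]
      rw [hset, hfun]
    · -- disjointness for the composition
      rw [Finset.disjoint_left]
      intro a ha
      rw [Finset.mem_sdiff] at ha
      exact Finset.disjoint_left.mp hBc ha.1

/-- Correctness of absorption: the absorption at a bag is the marginalization
of the full join onto that bag. -/
lemma absorb_correct (hG : G.IsTree) {bag : V → Finset Att}
    (hRI : RunningIntersection G bag) {L : V → (∀ a, Val a) → D}
    (hL : ∀ v, DependsOnlyOn (L v) (bag v))
    {M : V → V → (∀ a, Val a) → D} (hM : MsgSystem G bag L M) (b : V) :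
    absorb G L M b = margOver (Finset.univ.sup bag \ bag b) (fun t => ∏ v, L v t) := by
  set N := G.neighborFinset b with hN
  have hadj : ∀ x ∈ N, G.Adj x b := fun x hx =>
    ((SimpleGraph.mem_neighborFinset _ _ _).mp hx).symm
  have hnotin : ∀ x ∈ N, ∀ x' ∈ N, x ≠ x' → ∀ w ∈ subt G x' b, ¬ InSubtree G x b w := by
    intro x hx x' hx' hne w hw hc
    exact hne (inSubtree_disjoint hG (hadj x hx) (hadj x' hx') hc (mem_subt.mp hw))
  have hcross : ∀ x ∈ N, ∀ x' ∈ N, x ≠ x' →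
      Disjoint ((subt G x b).sup bag \ bag b) ((subt G x' b).sup bag) := by
    intro x hx x' hx' hne
    rw [Finset.disjoint_left]
    intro a ha ha'
    rw [Finset.mem_sdiff] at ha
    obtain ⟨y, hy, hay⟩ := Finset.mem_sup.mp ha.1
    obtain ⟨y', hy', hay'⟩ := Finset.mem_sup.mp ha'
    exact ha.2 (attr_mem_center hG hRI (mem_subt.mp hy)
      (hnotin x hx x' hx' hne y' hy') hay hay')
  have hmsg : ∀ x ∈ N, M x b = margOver ((subt G x b).sup bag \ bag b)
      (fun t => ∏ w ∈ subt G x b, L w t) :=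
    fun x hx => msg_correct hG hRI hL hM (subt G x b).card x b (hadj x hx) le_rfl
  have hprod : (fun t => ∏ x ∈ N, M x b t) =
      margOver (N.sup (fun x => (subt G x b).sup bag \ bag b))
        (fun t => ∏ x ∈ N, (∏ w ∈ subt G x b, L w t)) := by
    have := prod_margOver (D := D) N
      (fun x => fun t => ∏ w ∈ subt G x b, L w t)
      (fun x => (subt G x b).sup bag)
      (fun x => (subt G x b).sup bag \ bag b)
      (fun x _ => DependsOnlyOn.prod _ _ _ (fun w _ => hL w))
      (fun x _ => Finset.sdiff_subset)
      (fun x hx x' hx' hne => hcross x hx x' hx' hne)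
    rw [← this]
    funext t
    exact Finset.prod_congr rfl fun x hx => by rw [hmsg x hx]
  set B := N.sup (fun x => (subt G x b).sup bag \ bag b) with hB
  have hBc : Disjoint (bag b) B := by
    rw [hB, Finset.disjoint_sup_right]
    intro x hx
    rw [Finset.disjoint_right]
    intro a ha
    exact (Finset.mem_sdiff.mp ha).2
  have habs : absorb G L M b = margOver B (fun t => L b t *
      ∏ x ∈ N, (∏ w ∈ subt G x b, L w t)) := by
    rw [margOver_mul_left (hL b) hBc]
    funext t
    rw [absorb, congrFun hprod t]
  rw [habs]
  have hset : B = Finset.univ.sup bag \ bag b := by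
    ext a
    simp only [hB, Finset.mem_sup, Finset.mem_sdiff]
    constructor
    · rintro ⟨x, hx, ha⟩
      obtain ⟨⟨y, hy, hay⟩, hab⟩ := ha
      exact ⟨⟨y, Finset.mem_univ y, hay⟩, hab⟩
    · rintro ⟨ha, hab⟩
      obtain ⟨y, -, hay⟩ := ha
      have hyb : y ≠ b := fun h => hab (h ▸ hay)
      obtain ⟨x, hx1, hx3⟩ := global_step hG hyb
      refine ⟨x, (SimpleGraph.mem_neighborFinset _ _ _).mpr hx1.symm, ?_⟩
      exact ⟨⟨y, mem_subt.mpr hx3, hay⟩, hab⟩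
  have hfun : (fun t => L b t * ∏ x ∈ N, (∏ w ∈ subt G x b, L w t)) =
      (fun t => ∏ v, L v t) := by
    funext t
    rw [show (Finset.univ : Finset V) = insert b (N.biUnion (fun x => subt G x b)) from
      univ_decomp hG b, Finset.prod_insert root_not_mem_biUnion,
      Finset.prod_biUnion (subt_pairwiseDisjoint hG (le_refl N))]
  rw [hset, hfun]

end Msg
section Aug

open SimpleGraph Walk

variable {V : Type*} [Fintype V] [DecidableEq V] {G : SimpleGraph V} {b : V}

lemma augGraph_adj_some_some {u w : V} :
    (augGraph G b).Adj (some u) (some w) ↔ G.Adj u w := by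
  rw [augGraph, SimpleGraph.fromRel_adj]
  constructor
  · rintro ⟨hne, (⟨a, c, ha, hc, hadj⟩ | ⟨h, -⟩) | (⟨a, c, ha, hc, hadj⟩ | ⟨h, -⟩)⟩
    · cases ha; cases hc; exact hadj
    · exact absurd h (by simp)
    · cases ha; cases hc; exact hadj.symm
    · exact absurd h (by simp)
  · intro h
    exact ⟨fun hc => h.ne (Option.some_injective _ hc), Or.inl (Or.inl ⟨u, w, rfl, rfl, h⟩)⟩

lemma augGraph_adj_none {x : Option V} :
    (augGraph G b).Adj none x ↔ x = some b := by
  rw [augGraph, SimpleGraph.fromRel_adj]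
  constructor
  · rintro ⟨hne, (⟨a, c, ha, hc, hadj⟩ | ⟨-, h⟩) | (⟨a, c, ha, hc, hadj⟩ | ⟨-, h⟩)⟩
    · exact absurd ha (by simp)
    · exact h
    · exact absurd hc (by simp)
    · exact absurd h (by simp)
  · rintro rfl
    exact ⟨by simp, Or.inl (Or.inr ⟨rfl, rfl⟩)⟩

lemma augGraph_adj_none' {x : Option V} :
    (augGraph G b).Adj x none ↔ x = some b := by
  rw [SimpleGraph.adj_comm]
  exact augGraph_adj_none

/-- The embedding of the original junction tree into the augmented one. -/
def augHom (G : SimpleGraph V) (b : V) : G →g augGraph G b :=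
  ⟨some, fun h => augGraph_adj_some_some.mpr h⟩

lemma lift_walk : ∀ {x y : Option V} (p : (augGraph G b).Walk x y) (u w : V)
    (hx : x = some u) (hy : y = some w), none ∉ p.support →
    ∃ q : G.Walk u w, q.map (augHom G b) = p.copy hx hy := by
  intro x y p
  induction p with
  | nil =>
    rintro u w rfl hw -
    obtain rfl := Option.some.inj hw
    exact ⟨Walk.nil, rfl⟩
  | cons h p ih =>
    rename_i x z y
    rintro u w rfl rfl hn
    match z, h, p, ih, hn with
    | none, h, p, ih, hn =>
      exact absurd (by simp) hn
    | some z', h, p, ih, hn =>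
      obtain ⟨q, hq⟩ := ih z' w rfl rfl (fun hc => hn (by simp [hc]))
      rw [Walk.copy_rfl_rfl] at hq
      exact ⟨Walk.cons (augGraph_adj_some_some.mp h) q, by rw [Walk.map_cons, hq]; rfl⟩

lemma none_not_mem_path_support {u w : V} (p : (augGraph G b).Walk (some u) (some w))
    (hp : p.IsPath) : none ∉ p.support := by
  intro hn
  set t := p.takeUntil none hn with ht
  set d := p.dropUntil none hn with hd
  have htp : t.IsPath := hp.takeUntil hn
  have hdp : d.IsPath := hp.dropUntil hn
  -- the second vertex of `d` is `some b`
  obtain ⟨z, hz, d', hd'⟩ := Walk.exists_eq_cons_of_ne (by simp : (none : Option V) ≠ some w) d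
  have hzb : z = some b := augGraph_adj_none.mp hz
  have hbd : some b ∈ d.support.tail := by
    rw [hd', Walk.support_cons]
    exact hzb ▸ d'.start_mem_support
  -- the penultimate vertex of `t` is `some b`
  obtain ⟨z', hz', q, hq⟩ := Walk.exists_eq_cons_of_ne (by simp : (none : Option V) ≠ some u)
    t.reverse
  have hz'b : z' = some b := augGraph_adj_none.mp hz'
  have hbt : some b ∈ t.support := by
    rw [← List.mem_reverse, ← Walk.support_reverse, hq, Walk.support_cons]
    exact List.mem_cons_of_mem _ (hz'b ▸ q.start_mem_support)
  have hnd := hp.support_nodup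
  rw [← p.take_spec hn, Walk.support_append, List.nodup_append] at hnd
  exact hnd.2.2 _ hbt _ hbd rfl

lemma aug_RI_some {Att : Type*} [Fintype Att] [DecidableEq Att]
    {bag : V → Finset Att} (hRI : RunningIntersection G bag)
    {ST : Finset Att} {a : Att} {u w : V}
    (p : (augGraph G b).Walk (some u) (some w)) (hp : p.IsPath)
    (hau : a ∈ bag u) (haw : a ∈ bag w) :
    ∀ z ∈ p.support, a ∈ Option.elim z ST bag := by
  obtain ⟨q, hq⟩ := lift_walk p u w rfl rfl (none_not_mem_path_support p hp)
  rw [Walk.copy_rfl_rfl] at hq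
  have hqp : q.IsPath := Walk.IsPath.of_map (f := augHom G b) (hq ▸ hp)
  intro z hz
  rw [← hq] at hz
  replace hz : z ∈ q.support.map (augHom G b) := by rw [← Walk.support_map]; exact hz
  rw [List.mem_map] at hz
  obtain ⟨z', hz', rfl⟩ := hz
  exact hRI a u w q hqp hau haw z' hz'

variable (hG : G.IsTree)
include hG

lemma aug_path_unique_some {u w : V} (p q : (augGraph G b).Walk (some u) (some w))
    (hp : p.IsPath) (hq : q.IsPath) : p = q := by
  obtain ⟨p', hp'⟩ := lift_walk p u w rfl rfl (none_not_mem_path_support p hp)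
  obtain ⟨q', hq'⟩ := lift_walk q u w rfl rfl (none_not_mem_path_support q hq)
  rw [Walk.copy_rfl_rfl] at hp' hq'
  have hpp : p'.IsPath := Walk.IsPath.of_map (f := augHom G b) (hp' ▸ hp)
  have hqp : q'.IsPath := Walk.IsPath.of_map (f := augHom G b) (hq' ▸ hq)
  rw [← hp', ← hq', (hG.existsUnique_path u w).unique hpp hqp]

lemma aug_path_unique_none {w : V} (p q : (augGraph G b).Walk none (some w))
    (hp : p.IsPath) (hq : q.IsPath) : p = q := by
  obtain ⟨z, hz, p', hp'⟩ := Walk.exists_eq_cons_of_ne (by simp : (none : Option V) ≠ some w) p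
  obtain ⟨z', hz', q', hq'⟩ := Walk.exists_eq_cons_of_ne (by simp : (none : Option V) ≠ some w) q
  have hzb : z = some b := augGraph_adj_none.mp hz
  have hz'b : z' = some b := augGraph_adj_none.mp hz'
  subst hzb hz'b
  rw [hp'] at hp
  rw [hq'] at hq
  rw [Walk.cons_isPath_iff] at hp hq
  rw [hp', hq', aug_path_unique_some hG p' q' hp.1 hq.1]

lemma aug_isTree : (augGraph G b).IsTree := by
  rw [SimpleGraph.isTree_iff]
  constructor
  · -- connectivity
    have hreach : ∀ x : Option V, (augGraph G b).Reachable x (some b) := by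
      intro x
      match x with
      | none => exact (augGraph_adj_none.mpr rfl).reachable
      | some u =>
        exact SimpleGraph.Reachable.map (augHom G b) (hG.isConnected.preconnected u b)
    haveI : Nonempty (Option V) := ⟨none⟩
    exact SimpleGraph.Connected.mk (fun x y => (hreach x).trans (hreach y).symm)
  · apply SimpleGraph.isAcyclic_of_path_unique
    rintro x y ⟨p, hp⟩ ⟨q, hq⟩
    rw [Subtype.mk.injEq]
    match x, y with
    | some u, some w => exact aug_path_unique_some hG p q hp hq
    | none, some w => exact aug_path_unique_none hG p q hp hq
    | some u, none =>
      have := aug_path_unique_none hG p.reverse q.reverse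
        ((Walk.isPath_reverse_iff p).mpr hp) ((Walk.isPath_reverse_iff q).mpr hq)
      rw [← Walk.reverse_reverse p, this, Walk.reverse_reverse]
    | none, none =>
      rw [(Walk.isPath_iff_eq_nil (p := p)).mp hp, (Walk.isPath_iff_eq_nil (p := q)).mp hq]

variable {Att : Type*} [Fintype Att] [DecidableEq Att]

omit hG in
lemma aug_RI {bag : V → Finset Att} (hRI : RunningIntersection G bag)
    {ST : Finset Att} (hkey : ST ∩ Finset.univ.sup bag ⊆ bag b) :
    RunningIntersection (augGraph G b) (fun x => Option.elim x ST bag) := by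
  have hcase : ∀ (a : Att) (w : V) (p : (augGraph G b).Walk none (some w)), p.IsPath →
      a ∈ ST → a ∈ bag w → ∀ z ∈ p.support, a ∈ Option.elim z ST bag := by
    intro a w p hp ha haw
    obtain ⟨z, hz, p', hp'⟩ := Walk.exists_eq_cons_of_ne (by simp : (none : Option V) ≠ some w) p
    have hzb : z = some b := augGraph_adj_none.mp hz
    subst hzb
    rw [hp'] at hp
    rw [Walk.cons_isPath_iff] at hp
    have hab : a ∈ bag b :=
      hkey (Finset.mem_inter.mpr ⟨ha, Finset.mem_sup.mpr ⟨w, Finset.mem_univ w, haw⟩⟩)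
    intro z hz'
    rw [hp', Walk.support_cons] at hz'
    rcases List.mem_cons.mp hz' with rfl | hz'
    · exact ha
    · exact aug_RI_some hRI p' hp.1 hab haw z hz'
  intro a x y p hp hax hay
  match x, y with
  | some u, some w => exact aug_RI_some hRI p hp hax hay
  | none, some w => exact hcase a w p hp hax hay
  | some u, none =>
    intro z hz
    exact hcase a u p.reverse ((Walk.isPath_reverse_iff p).mpr hp) hay hax z
      (by rwa [Walk.support_reverse, List.mem_reverse])
  | none, none =>
    intro z hz
    rw [(Walk.isPath_iff_eq_nil (p := p)).mp hp, Walk.support_nil] at hz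
    rcases List.mem_singleton.mp hz with rfl
    exact hax

end Aug
/-- Data augmentation with a single-bag join key requires a Steiner tree of
exactly two bags: if a new relation `T` has all its join attributes (the
attributes it shares with the existing join graph) contained in bag `b`, then
(i) extending the junction tree with a new bag for `T` connected to `b`
preserves the junction tree properties (it is again a tree over the bags, with
the running intersection property), and (ii) only the single message `b → T`
(the absorption at `b`, computed from the already materialized messages,
marginalized onto `T`'s attributes) needs to be computed: joining `T` with it
gives exactly the aggregation of the augmented full join onto the new bag. -/
theorem augmentation_single_bag (G : SimpleGraph V) [DecidableRel G.Adj]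
    (hG : G.IsTree) (bag : V → Finset Att)
    (hRI : RunningIntersection G bag)
    (L : V → (∀ a, Val a) → D)
    (hL : ∀ v, DependsOnlyOn (L v) (bag v))
    (M : V → V → (∀ a, Val a) → D) (hM : MsgSystem G bag L M)
    (b : V) (ST : Finset Att) (T : (∀ a, Val a) → D)
    (hT : DependsOnlyOn T ST)
    (hkey : ST ∩ Finset.univ.sup bag ⊆ bag b) :
    (augGraph G b).IsTree ∧
      RunningIntersection (augGraph G b) (fun x => Option.elim x ST bag) ∧
      (fun t => T t * margOver (bag b \ ST) (absorb G L M b) t) =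
        margOver ((Finset.univ.sup bag ∪ ST) \ ST)
          (fun t => T t * ∏ v, L v t) := by
  refine ⟨aug_isTree hG, aug_RI hRI hkey, ?_⟩
  have habs := absorb_correct hG hRI hL hM b
  have hsub : bag b ⊆ Finset.univ.sup bag := Finset.le_sup (Finset.mem_univ b)
  have hd : Disjoint (bag b \ ST) (Finset.univ.sup bag \ bag b) := by
    rw [Finset.disjoint_left]
    intro a ha hb
    exact (Finset.mem_sdiff.mp hb).2 (Finset.mem_sdiff.mp ha).1
  have h1 : margOver (bag b \ ST) (absorb G L M b)
      = margOver ((bag b \ ST) ∪ (Finset.univ.sup bag \ bag b)) (fun t => ∏ v, L v t) := by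
    rw [habs, margOver_margOver hd]
  have hset : (bag b \ ST) ∪ (Finset.univ.sup bag \ bag b) = Finset.univ.sup bag \ ST := by
    ext a
    simp only [Finset.mem_union, Finset.mem_sdiff]
    constructor
    · rintro (⟨ha1, ha2⟩ | ⟨ha1, ha2⟩)
      · exact ⟨hsub ha1, ha2⟩
      · exact ⟨ha1, fun hst => ha2 (hkey (Finset.mem_inter.mpr ⟨hst, ha1⟩))⟩
    · rintro ⟨ha1, ha2⟩
      by_cases hb : a ∈ bag b
      · exact Or.inl ⟨hb, ha2⟩
      · exact Or.inr ⟨ha1, hb⟩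
  have hset2 : (Finset.univ.sup bag ∪ ST) \ ST = Finset.univ.sup bag \ ST := by
    ext a
    simp only [Finset.mem_sdiff, Finset.mem_union]
    tauto
  have hdT : Disjoint ST (Finset.univ.sup bag \ ST) := by
    rw [Finset.disjoint_right]
    intro a ha
    exact (Finset.mem_sdiff.mp ha).2
  calc (fun t => T t * margOver (bag b \ ST) (absorb G L M b) t)
      = fun t => T t * margOver (Finset.univ.sup bag \ ST) (fun s => ∏ v, L v s) t := by
        funext t
        rw [congrFun h1 t, hset]
    _ = margOver (Finset.univ.sup bag \ ST) (fun t => T t * ∏ v, L v t) :=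
        (margOver_mul_left hT hdT).symm
    _ = margOver ((Finset.univ.sup bag ∪ ST) \ ST) (fun t => T t * ∏ v, L v t) := by
        rw [hset2]
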